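/- arXiv:2104.07028 — 6 statements merged into one kernel-verified Lean document; each statement's English description precedes it below -/
import Mathlib

section
/- Let c* be the unique positive root of 2 − 2e^c + c(e^c − 2) = 0. For every real b with b ≥ 1/c*, the program value α(b) = sup{ w·c²·e^{−c} − w²·c²·e^{−2c} : 0 ≤ w ≤ 1, c ≥ 0, w ≤ b·c } equals sup_{c ≥ 0} c²(e^{−c} − e^{−2c}) = (c*)²(e^{−c*} − e^{−2c*}), and this value is attained at the feasible point w = 1, c = c*. -/
/-!
Write `g(c) = c²(e^{-c} - e^{-2c})` for the objective at `w = 1`. Its derivative is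
`-c e^{-2c} h(c)` with `h(c) = 2 - 2eᶜ + c(eᶜ - 2)`. Since `h'' = c eᶜ ≥ 0`, `h` is convex on
`[0, ∞)` and vanishes at `0` and `c*`, so it is `≤ 0` on `[0, c*]` and `≥ 0` beyond: `g` peaks at
`c*`. For any weight, `w c² e^{-c} - w² c² e^{-2c} = c² e^{-2c} (w eᶜ - w²)`. When `eᶜ ≥ 2` the
concave factor in `w` is maximal at `w = 1` over `w ≤ 1`, giving `g(c)`; when `eᶜ < 2` it is at
most `e^{2c}/4`, giving `c²/4 ≤ (log 2)²/4 = g(log 2)`.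
-/

open Real Set

noncomputable def alphaVal (b : ℝ) : ℝ :=
  sSup {v : ℝ | ∃ w c : ℝ, 0 ≤ w ∧ w ≤ 1 ∧ 0 ≤ c ∧ w ≤ b * c ∧
    v = w * c ^ 2 * Real.exp (-c) - w ^ 2 * c ^ 2 * Real.exp (-(2 * c))}

noncomputable def objective (w c : ℝ) : ℝ :=
  w * c ^ 2 * exp (-c) - w ^ 2 * c ^ 2 * exp (-(2 * c))

noncomputable def unitObjective (c : ℝ) : ℝ := c ^ 2 * (exp (-c) - exp (-(2 * c)))

noncomputable def rootFun (c : ℝ) : ℝ := 2 - 2 * exp c + c * (exp c - 2)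

lemma exp_neg_eq_exp_mul_exp_neg_two_mul (c : ℝ) : exp (-c) = exp c * exp (-(2 * c)) := by
  rw [← exp_add]; ring_nf

lemma exp_neg_two_mul (c : ℝ) : exp (-(2 * c)) = exp (-c) ^ 2 := by
  rw [← exp_nat_mul]; ring_nf

section RootFun

lemma rootFun_zero : rootFun 0 = 0 := by simp [rootFun]

lemma hasDerivAt_rootFun (c : ℝ) : HasDerivAt rootFun (exp c * (c - 1) - 2) c :=
  ((((hasDerivAt_exp c).const_mul 2).const_sub 2).add
    ((hasDerivAt_id' c).mul ((hasDerivAt_exp c).sub_const 2))).congr_deriv (by ring)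

lemma hasDerivAt_exp_mul_sub_one_sub_two (c : ℝ) :
    HasDerivAt (fun c => exp c * (c - 1) - 2) (c * exp c) c :=
  (((hasDerivAt_exp c).mul ((hasDerivAt_id' c).sub_const 1)).sub_const 2).congr_deriv (by ring)

lemma convexOn_rootFun : ConvexOn ℝ (Ici 0) rootFun := by
  refine convexOn_of_hasDerivWithinAt2_nonneg (convex_Ici 0)
    (fun x _ => (hasDerivAt_rootFun x).continuousAt.continuousWithinAt)
    (fun x _ => (hasDerivAt_rootFun x).hasDerivWithinAt)
    (fun x _ => (hasDerivAt_exp_mul_sub_one_sub_two x).hasDerivWithinAt) ?_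
  intro x hx
  rw [interior_Ici] at hx
  exact mul_nonneg (le_of_lt hx) (exp_pos x).le

variable {cs c : ℝ}

lemma rootFun_nonpos_of_le (hcs : 0 < cs) (hroot : rootFun cs = 0) (hc : 0 ≤ c)
    (hccs : c ≤ cs) : rootFun c ≤ 0 := by
  have := convexOn_rootFun.le_on_segment (mem_Ici.2 le_rfl) (mem_Ici.2 hcs.le)
    (by rw [segment_eq_Icc hcs.le]; exact ⟨hc, hccs⟩)
  simpa [rootFun_zero, hroot] using this

lemma rootFun_nonneg_of_le (hcs : 0 < cs) (hroot : rootFun cs = 0) (hcsc : cs ≤ c) :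
    0 ≤ rootFun c := by
  have := convexOn_rootFun.le_right_of_left_le'' (mem_Ici.2 le_rfl)
    (mem_Ici.2 (hcs.le.trans hcsc)) hcs hcsc (by rw [rootFun_zero, hroot])
  rwa [hroot] at this

end RootFun

lemma hasDerivAt_unitObjective (c : ℝ) :
    HasDerivAt unitObjective (-(c * exp (-(2 * c)) * rootFun c)) c := by
  have hneg : HasDerivAt (fun c : ℝ => exp (-c)) (-exp (-c)) c :=
    (hasDerivAt_neg' c).exp.congr_deriv (by ring)
  have hneg_two : HasDerivAt (fun c : ℝ => exp (-(2 * c))) (-2 * exp (-(2 * c))) c :=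
    (((hasDerivAt_id' c).const_mul 2).fun_neg.exp).congr_deriv (by ring)
  refine ((hasDerivAt_pow 2 c).mul (hneg.fun_sub hneg_two)).congr_deriv ?_
  rw [exp_neg_eq_exp_mul_exp_neg_two_mul, rootFun]; push_cast; ring

lemma isMaxOn_unitObjective {cs : ℝ} (hcs : 0 < cs) (hroot : rootFun cs = 0) :
    IsMaxOn unitObjective (Ici 0) cs := by
  have hderiv (s : Set ℝ) (x : ℝ) := (hasDerivAt_unitObjective x).hasDerivWithinAt (s := s)
  have hcont (s : Set ℝ) := HasDerivAt.continuousOn (s := s) fun x _ => hasDerivAt_unitObjective x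
  have hmono := monotoneOn_of_hasDerivWithinAt_nonneg (convex_Icc 0 cs) (hcont _)
    (fun x _ => hderiv _ x) fun x hx => by
      rw [interior_Icc] at hx
      exact neg_nonneg.2 <| mul_nonpos_of_nonneg_of_nonpos
        (mul_nonneg hx.1.le (exp_pos _).le) (rootFun_nonpos_of_le hcs hroot hx.1.le hx.2.le)
  have hanti := antitoneOn_of_hasDerivWithinAt_nonpos (convex_Ici cs) (hcont _)
    (fun x _ => hderiv _ x) fun x hx => by
      rw [interior_Ici] at hx
      exact neg_nonpos.2 <| mul_nonneg (mul_nonneg (hcs.trans hx).le (exp_pos _).le)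
        (rootFun_nonneg_of_le hcs hroot (le_of_lt hx))
  refine isMaxOn_iff.2 fun c (hc : 0 ≤ c) => ?_
  rcases le_total c cs with hccs | hcsc
  · exact hmono ⟨hc, hccs⟩ ⟨hcs.le, le_rfl⟩ hccs
  · exact hanti (mem_Ici.2 le_rfl) hcsc hcsc

lemma unitObjective_log_two : unitObjective (log 2) = log 2 ^ 2 / 4 := by
  rw [unitObjective, exp_neg_two_mul, exp_neg, exp_log two_pos]; ring

lemma objective_one (c : ℝ) : objective 1 c = unitObjective c := by
  rw [objective, unitObjective]; ring

lemma objective_le_sq_div_four (w c : ℝ) : objective w c ≤ c ^ 2 / 4 := by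
  rw [objective, exp_neg_two_mul]
  nlinarith [mul_nonneg (sq_nonneg c) (sq_nonneg (w * exp (-c) - 1 / 2))]

lemma objective_le_unitObjective_of_two_le_exp {w c : ℝ} (hw : w ≤ 1) (h2 : 2 ≤ exp c) :
    objective w c ≤ unitObjective c := by
  have hgap : unitObjective c - objective w c =
      c ^ 2 * exp (-(2 * c)) * ((1 - w) * (exp c - 1 - w)) := by
    rw [unitObjective, objective, exp_neg_eq_exp_mul_exp_neg_two_mul]; ring
  have := mul_nonneg (mul_nonneg (sq_nonneg c) (exp_pos (-(2 * c))).le)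
    (mul_nonneg (sub_nonneg.2 hw) (by linarith : 0 ≤ exp c - 1 - w))
  linarith

lemma objective_le_unitObjective_root {cs w c : ℝ} (hcs : 0 < cs) (hroot : rootFun cs = 0)
    (hw : w ≤ 1) (hc : 0 ≤ c) : objective w c ≤ unitObjective cs := by
  have hmax := isMaxOn_iff.1 (isMaxOn_unitObjective hcs hroot)
  rcases le_total 2 (exp c) with h2 | h2
  · exact (objective_le_unitObjective_of_two_le_exp hw h2).trans (hmax c hc)
  · have hc2 : c ≤ log 2 := (le_log_iff_exp_le two_pos).2 h2
    calc objective w c ≤ c ^ 2 / 4 := objective_le_sq_div_four w c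
      _ ≤ log 2 ^ 2 / 4 := by gcongr
      _ = unitObjective (log 2) := unitObjective_log_two.symm
      _ ≤ unitObjective cs := hmax _ (log_nonneg one_le_two)

/-- **Phase `w = 1` (large alphabet).** For `b ≥ 1/c*`, where `c*` is the unique
positive root of `2 - 2eᶜ + c(eᶜ - 2) = 0`, the value `α(b)` equals
`sup_{c ≥ 0} c²(e^{-c} - e^{-2c}) = (c*)²(e^{-c*} - e^{-2c*})`, attained at the
feasible point `w = 1`, `c = c*`. -/
theorem alpha_of_large_alphabet
    (cs : ℝ) (hcs : 0 < cs)
    (hroot : 2 - 2 * Real.exp cs + cs * (Real.exp cs - 2) = 0)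
    (b : ℝ) (hb : 1 / cs ≤ b) :
    alphaVal b = sSup {v : ℝ | ∃ c : ℝ, 0 ≤ c ∧
        v = c ^ 2 * (Real.exp (-c) - Real.exp (-(2 * c)))} ∧
    alphaVal b = cs ^ 2 * (Real.exp (-cs) - Real.exp (-(2 * cs))) ∧
    (0 ≤ (1 : ℝ) ∧ (1 : ℝ) ≤ 1 ∧ 0 ≤ cs ∧ (1 : ℝ) ≤ b * cs) ∧
    1 * cs ^ 2 * Real.exp (-cs) - 1 ^ 2 * cs ^ 2 * Real.exp (-(2 * cs)) = alphaVal b := by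
  have hbcs : 1 ≤ b * cs := by rwa [div_le_iff₀ hcs] at hb
  have hα : alphaVal b = unitObjective cs := by
    refine IsGreatest.csSup_eq ⟨⟨1, cs, zero_le_one, le_rfl, hcs.le, hbcs, (objective_one cs).symm⟩, ?_⟩
    rintro v ⟨w, c, -, hw, hc, -, rfl⟩
    exact objective_le_unitObjective_root hcs hroot hw hc
  have hsup : sSup {v : ℝ | ∃ c : ℝ, 0 ≤ c ∧ v = c ^ 2 * (exp (-c) - exp (-(2 * c)))} =
      unitObjective cs := by
    refine IsGreatest.csSup_eq ⟨⟨cs, hcs.le, rfl⟩, ?_⟩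
    rintro v ⟨c, hc, rfl⟩
    exact isMaxOn_iff.1 (isMaxOn_unitObjective hcs hroot) c hc
  exact ⟨hα.trans hsup.symm, hα, ⟨zero_le_one, le_rfl, hcs.le, hbcs⟩,
    (objective_one cs).trans hα.symm⟩
end

section
/- Let c* be the unique positive root of 2 − 2e^c + c(e^c − 2) = 0. For every real b with 0 < b < 1/c*, the program value α(b) = sup{ w·c²·e^{−c} − w²·c²·e^{−2c} : 0 ≤ w ≤ 1, c ≥ 0, w ≤ b·c } equals sup{ b·c³·e^{−c} − b²·c⁴·e^{−2c} : 0 < c ≤ 1/b }, and it is attained at a feasible point with w = b·c (i.e. on the boundary of the constraint w ≤ b·c). -/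
/-!
Write `F(w, c) = w c² e^{-2c} (e^c - w)` for the objective. Since `b < 1/c* < 1/2`, every feasible
`w` satisfies `w + min(1, bc) ≤ 2bc ≤ e^c`, so `F(·, c)` increases up to `w = min(1, bc)`. When
`bc ≤ 1` this is the boundary value at `c`; when `bc > 1` it is `F(1, c)`, and `F(1, ·)` decreases
on `[c*, ∞) ⊇ [1/b, ∞)`, so it is at most the boundary value at `c = 1/b`. Hence `α(b)` is the
maximum of the boundary value over the compact interval `[0, 1/b]`, which is positive and so is
attained at some `c > 0`.
-/

open Real

open Set

noncomputable def alphaObjective (w c : ℝ) : ℝ :=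
  w * c ^ 2 * exp (-c) - w ^ 2 * c ^ 2 * exp (-(2 * c))

/-- `c*` is the positive zero of this function. -/
noncomputable def thresholdFn (c : ℝ) : ℝ :=
  2 - 2 * exp c + c * (exp c - 2)

lemma alphaObjective_eq (w c : ℝ) :
    alphaObjective w c = w * c ^ 2 * exp (-(2 * c)) * (exp c - w) := by
  have hexp : exp (-c) = exp (-(2 * c)) * exp c := by rw [← exp_add]; ring_nf
  rw [alphaObjective, hexp]
  ring

lemma alphaObjective_le_of_le {w m c : ℝ} (hwm : w ≤ m) (hsum : m + w ≤ exp c) :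
    alphaObjective w c ≤ alphaObjective m c := by
  have hdiff : alphaObjective m c - alphaObjective w c
      = (m - w) * (c ^ 2 * exp (-(2 * c))) * (exp c - (m + w)) := by
    rw [alphaObjective_eq, alphaObjective_eq]; ring
  rw [← sub_nonneg, hdiff]
  exact mul_nonneg (mul_nonneg (by linarith) (by positivity)) (by linarith)

lemma alphaObjective_one_pos {c : ℝ} (hc : 0 < c) : 0 < alphaObjective 1 c := by
  rw [alphaObjective_eq]
  have : 1 < exp c := one_lt_exp_iff.2 hc
  have : 0 < exp c - 1 := by linarith
  positivity

lemma hasDerivAt_alphaObjective_one (x : ℝ) :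
    HasDerivAt (alphaObjective 1) (-(x * exp (-(2 * x)) * thresholdFn x)) x := by
  have hfun : alphaObjective 1 = fun c => c ^ 2 * exp (-(2 * c)) * (exp c - 1) := by
    funext c; rw [alphaObjective_eq]; ring
  have hsq : HasDerivAt (fun c : ℝ => c ^ 2) (2 * x) x := by
    simpa using hasDerivAt_pow 2 x
  have hdecay : HasDerivAt (fun c : ℝ => exp (-(2 * c))) (exp (-(2 * x)) * -2) x :=
    ((hasDerivAt_id x).const_mul 2).neg.exp.congr_deriv (by simp)
  have hgrowth : HasDerivAt (fun c : ℝ => exp c - 1) (exp x) x :=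
    (hasDerivAt_exp x).sub_const 1
  rw [hfun]
  exact ((hsq.mul hdecay).mul hgrowth).congr_deriv (by simp only [Pi.mul_apply, thresholdFn]; ring)

lemma thresholdFn_neg {c : ℝ} (hc : 0 < c) (hc2 : c ≤ 2) : thresholdFn c < 0 := by
  rw [thresholdFn]
  nlinarith [add_one_le_exp c, exp_pos c]

lemma two_lt_of_thresholdFn_eq_zero {c : ℝ} (hc : 0 < c) (hroot : thresholdFn c = 0) : 2 < c := by
  by_contra! hc2
  exact (thresholdFn_neg hc hc2).ne hroot

lemma thresholdFn_nonneg_of_le {cs x : ℝ} (hcs : 1 ≤ cs) (hroot : thresholdFn cs = 0)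
    (hx : cs ≤ x) : 0 ≤ thresholdFn x := by
  have hexp : exp x = exp cs * exp (x - cs) := by rw [← exp_add]; ring_nf
  have hsplit : thresholdFn x
      = (2 * cs - 2) * (exp (x - cs) - 1) + (x - cs) * (exp x - 2) := by
    rw [thresholdFn] at hroot ⊢
    linear_combination (cs - 2) * hexp + exp (x - cs) * hroot
  have h1 : 1 ≤ exp (x - cs) := one_le_exp (by linarith)
  have h2 : 2 ≤ exp x := by linarith [add_one_le_exp x]
  rw [hsplit]
  exact add_nonneg (mul_nonneg (by linarith) (by linarith)) (mul_nonneg (by linarith) (by linarith))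

lemma alphaObjective_one_antitoneOn {cs : ℝ} (hcs : 1 ≤ cs) (hroot : thresholdFn cs = 0) :
    AntitoneOn (alphaObjective 1) (Ici cs) := by
  refine antitoneOn_of_deriv_nonpos (convex_Ici cs)
    (fun x _ => (hasDerivAt_alphaObjective_one x).continuousAt.continuousWithinAt)
    (fun x _ => (hasDerivAt_alphaObjective_one x).differentiableAt.differentiableWithinAt)
    fun x hx => ?_
  rw [interior_Ici] at hx
  have hx0 : 0 < x := by linarith [mem_Ioi.1 hx]
  rw [(hasDerivAt_alphaObjective_one x).deriv, neg_nonpos]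
  exact mul_nonneg (by positivity) (thresholdFn_nonneg_of_le hcs hroot hx.le)

lemma alphaObjective_le_boundary {b w c : ℝ} (hb : 0 < b) (hb2 : b ≤ 1 / 2)
    (hanti : AntitoneOn (alphaObjective 1) (Ici (1 / b)))
    (hw1 : w ≤ 1) (hc : 0 ≤ c) (hwbc : w ≤ b * c) :
    ∃ c' ∈ Icc 0 (1 / b), alphaObjective w c ≤ alphaObjective (b * c') c' := by
  have hsum : min 1 (b * c) + w ≤ exp c := by
    have := min_le_right 1 (b * c)
    nlinarith [add_one_le_exp c]
  have hmax := alphaObjective_le_of_le (le_min hw1 hwbc) hsum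
  rcases le_or_gt (b * c) 1 with hbc | hbc
  · refine ⟨c, ⟨hc, by rwa [le_div_iff₀ hb, mul_comm]⟩, ?_⟩
    rwa [min_eq_right hbc] at hmax
  · have hcb : 1 / b ≤ c := by rw [div_le_iff₀ hb, mul_comm]; exact hbc.le
    refine ⟨1 / b, ⟨by positivity, le_rfl⟩, ?_⟩
    rw [min_eq_left hbc.le] at hmax
    rw [mul_one_div_cancel hb.ne']
    exact hmax.trans (hanti self_mem_Ici hcb hcb)

lemma exists_isMaxOn_alphaObjective_boundary {b : ℝ} (hb : 0 < b) :
    ∃ c₀ ∈ Ioc 0 (1 / b), IsMaxOn (fun c => alphaObjective (b * c) c) (Icc 0 (1 / b)) c₀ := by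
  have hend : 1 / b ∈ Icc 0 (1 / b) := right_mem_Icc.2 (by positivity)
  have hcont : Continuous fun c => alphaObjective (b * c) c := by
    unfold alphaObjective; fun_prop
  obtain ⟨c₀, ⟨hc₀, hc₀b⟩, hmax⟩ :=
    isCompact_Icc.exists_isMaxOn ⟨_, hend⟩ hcont.continuousOn
  refine ⟨c₀, ⟨hc₀.lt_of_ne ?_, hc₀b⟩, hmax⟩
  rintro rfl
  have hle := isMaxOn_iff.1 hmax _ hend
  have hzero : alphaObjective 0 0 = 0 := by simp [alphaObjective]
  rw [mul_one_div_cancel hb.ne', mul_zero, hzero] at hle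
  exact hle.not_gt (alphaObjective_one_pos (one_div_pos.2 hb))

theorem alpha_of_small_alphabet_general
    (cs : ℝ)
    (hroot : 2 - 2 * Real.exp cs + cs * (Real.exp cs - 2) = 0)
    (b : ℝ) (hb : 0 < b) (hb' : b < 1 / cs) :
    alphaVal b = sSup {v : ℝ | ∃ c : ℝ, 0 < c ∧ c ≤ 1 / b ∧
        v = b * c ^ 3 * Real.exp (-c) - b ^ 2 * c ^ 4 * Real.exp (-(2 * c))} ∧
    ∃ c : ℝ, 0 ≤ c ∧ (0 ≤ b * c ∧ b * c ≤ 1) ∧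
      (b * c) * c ^ 2 * Real.exp (-c) - (b * c) ^ 2 * c ^ 2 * Real.exp (-(2 * c))
        = alphaVal b := by
  have hcs : 0 < cs := one_div_pos.1 (hb.trans hb')
  have hcs2 : 2 < cs := two_lt_of_thresholdFn_eq_zero hcs hroot
  have hcsb : cs ≤ 1 / b := ((lt_one_div hb hcs).1 hb').le
  have hb2 : b ≤ 1 / 2 := by linarith [one_div_lt_one_div_of_lt two_pos hcs2]
  have hanti := (alphaObjective_one_antitoneOn (by linarith) hroot).mono (Ici_subset_Ici.2 hcsb)
  obtain ⟨c₀, ⟨hc₀, hc₀b⟩, hmax⟩ := exists_isMaxOn_alphaObjective_boundary hb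
  have hbc₀ : b * c₀ ≤ 1 := by rwa [le_div_iff₀ hb, mul_comm] at hc₀b
  have hα : alphaVal b = alphaObjective (b * c₀) c₀ := by
    refine IsGreatest.csSup_eq ⟨⟨b * c₀, c₀, by positivity, hbc₀, hc₀.le, le_rfl, rfl⟩, ?_⟩
    rintro v ⟨w, c, -, hw1, hc, hwbc, rfl⟩
    obtain ⟨c', hc', hle⟩ := alphaObjective_le_boundary hb hb2 hanti hw1 hc hwbc
    exact hle.trans (isMaxOn_iff.1 hmax _ hc')
  have hS : sSup {v : ℝ | ∃ c : ℝ, 0 < c ∧ c ≤ 1 / b ∧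
      v = b * c ^ 3 * exp (-c) - b ^ 2 * c ^ 4 * exp (-(2 * c))} = alphaObjective (b * c₀) c₀ := by
    refine IsGreatest.csSup_eq ⟨⟨c₀, hc₀, hc₀b, by rw [alphaObjective]; ring⟩, ?_⟩
    rintro v ⟨c, hc, hcb, rfl⟩
    calc _ = alphaObjective (b * c) c := by rw [alphaObjective]; ring
      _ ≤ _ := isMaxOn_iff.1 hmax _ ⟨hc.le, hcb⟩
  exact ⟨hα.trans hS.symm, c₀, hc₀.le, ⟨by positivity, hbc₀⟩, hα.symm⟩

/-- **Phase `w = bc` (small alphabet).** For `0 < b < 1/c*`, where `c*` is the unique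
positive root of `2 - 2eᶜ + c(eᶜ - 2) = 0`, the value `α(b)` equals
`sup { b c³ e^{-c} - b² c⁴ e^{-2c} : 0 < c ≤ 1/b }`, and it is attained at a feasible
point lying on the boundary `w = b c` of the constraint `w ≤ b c`. -/
theorem alpha_of_small_alphabet
    (cs : ℝ) (hcs : 0 < cs)
    (hroot : 2 - 2 * Real.exp cs + cs * (Real.exp cs - 2) = 0)
    (b : ℝ) (hb : 0 < b) (hb' : b < 1 / cs) :
    alphaVal b = sSup {v : ℝ | ∃ c : ℝ, 0 < c ∧ c ≤ 1 / b ∧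
        v = b * c ^ 3 * Real.exp (-c) - b ^ 2 * c ^ 4 * Real.exp (-(2 * c))} ∧
    ∃ c : ℝ, 0 ≤ c ∧ (0 ≤ b * c ∧ b * c ≤ 1) ∧
      (b * c) * c ^ 2 * Real.exp (-c) - (b * c) ^ 2 * c ^ 2 * Real.exp (-(2 * c))
        = alphaVal b :=
  alpha_of_small_alphabet_general cs hroot b hb hb'
end

section
/- The equation 2 − 2e^c + c(e^c − 2) = 0 has a unique root c* in (0,∞), and 2.26 < c* < 2.27. Moreover, the function g(c) = c²(e^{−c} − e^{−2c}) is strictly increasing on (0, c*), strictly decreasing on (c*, ∞), and hence attains its maximum over (0,∞) uniquely at c = c*. -/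
/-! With `h c = 2 - 2eᶜ + c(eᶜ - 2)` one has `g' c = -c e^{-2c} h c`, so `g'` has the sign of
`-h`. Since `h 0 = 0` and `h'' c = c eᶜ > 0`, `h` is strictly convex on `[0, ∞)`; hence it is
negative between its zeros `0` and `c*` and positive beyond `c*`, which gives both the uniqueness
of the root and the monotonicity of `g`. The root is located by the intermediate value theorem,
using Taylor bounds for `e^{0.26}` and `e^{0.27}`. -/

open Real

section ConvexZeros

variable {𝕜 : Type*} [Field 𝕜] [LinearOrder 𝕜] [IsStrictOrderedRing 𝕜] {s : Set 𝕜} {f : 𝕜 → 𝕜}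
  {a b x : 𝕜}

theorem StrictConvexOn.neg_of_mem_Ioo_of_eq_zero (hf : StrictConvexOn 𝕜 s f) (ha : a ∈ s)
    (hb : b ∈ s) (hfa : f a = 0) (hfb : f b = 0) (hx : x ∈ Set.Ioo a b) : f x < 0 := by
  have hab : a < b := hx.1.trans hx.2
  simpa [hfa, hfb] using hf.lt_on_openSegment ha hb hab.ne (by rwa [openSegment_eq_Ioo hab])

theorem StrictConvexOn.pos_of_lt_of_eq_zero (hf : StrictConvexOn 𝕜 s f) (ha : a ∈ s)
    (hx : x ∈ s) (hfa : f a = 0) (hfb : f b = 0) (hab : a < b) (hbx : b < x) : 0 < f x := by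
  have := hf.slope_strict_mono_adjacent ha hx hab hbx
  simp only [hfa, hfb, sub_zero, zero_div] at this
  exact (div_pos_iff_of_pos_right (sub_pos.2 hbx)).1 this

end ConvexZeros

namespace CriticalConstant

noncomputable def h (c : ℝ) : ℝ := 2 - 2 * exp c + c * (exp c - 2)

noncomputable def g (c : ℝ) : ℝ := c ^ 2 * (exp (-c) - exp (-(2 * c)))

theorem hasDerivAt_h (c : ℝ) : HasDerivAt h ((c - 1) * exp c - 2) c :=
  (((hasDerivAt_const c 2).fun_sub ((hasDerivAt_exp c).const_mul 2)).fun_add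
    ((hasDerivAt_id' c).fun_mul ((hasDerivAt_exp c).sub_const 2))).congr_deriv (by ring)

theorem strictConvexOn_h : StrictConvexOn ℝ (Set.Ici 0) h := by
  have hh' : deriv h = fun c => (c - 1) * exp c - 2 := funext fun c => (hasDerivAt_h c).deriv
  have hh'' (c : ℝ) : HasDerivAt (deriv h) (c * exp c) c := by
    rw [hh']
    exact ((((hasDerivAt_id' c).sub_const 1).fun_mul (hasDerivAt_exp c)).sub_const 2).congr_deriv
      (by ring)
  refine strictConvexOn_of_deriv2_pos (convex_Ici 0) (by unfold h; fun_prop) fun c hc => ?_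
  rw [interior_Ici] at hc
  rw [Function.iterate_succ_apply', Function.iterate_one, (hh'' c).deriv]
  exact mul_pos hc (exp_pos c)

theorem h_zero : h 0 = 0 := by simp [h]

theorem h_neg_of_mem_Ioo {cs c : ℝ} (hroot : h cs = 0) (hc : c ∈ Set.Ioo 0 cs) : h c < 0 :=
  strictConvexOn_h.neg_of_mem_Ioo_of_eq_zero Set.self_mem_Ici (hc.1.trans hc.2).le h_zero hroot hc

theorem h_pos_of_gt {cs c : ℝ} (hcs : 0 < cs) (hroot : h cs = 0) (hc : cs < c) : 0 < h c :=
  strictConvexOn_h.pos_of_lt_of_eq_zero Set.self_mem_Ici (hcs.trans hc).le h_zero hroot hcs hc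

theorem eq_of_h_eq_zero {cs c : ℝ} (hcs : 0 < cs) (hroot : h cs = 0) (hc : 0 < c)
    (hc0 : h c = 0) : c = cs := by
  rcases lt_trichotomy c cs with hlt | heq | hgt
  · exact absurd hc0 (h_neg_of_mem_Ioo hroot ⟨hc, hlt⟩).ne
  · exact heq
  · exact absurd hc0 (h_pos_of_gt hcs hroot hgt).ne'

theorem h_neg_at_2_26 : h 2.26 < 0 := by
  have he : exp 2.26 = exp 1 * exp 1 * exp 0.26 := by
    rw [← exp_add, ← exp_add]; norm_num
  have he1 := exp_one_lt_d9
  have he026 : exp 0.26 ≤ 1.2978 := by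
    have := exp_bound' (x := 0.26) (by norm_num) (by norm_num) (n := 3) (by norm_num)
    norm_num [Finset.sum_range_succ, Nat.factorial] at this ⊢
    linarith
  have : exp 2.26 < 9.6923 := by
    calc _ ≤ (2.7182818286 : ℝ) * 2.7182818286 * 1.2978 := by rw [he]; gcongr
      _ < _ := by norm_num
  unfold h; linarith

theorem h_pos_at_2_27 : 0 < h 2.27 := by
  have he : exp 2.27 = exp 1 * exp 1 * exp 0.27 := by
    rw [← exp_add, ← exp_add]; norm_num
  have he1 := exp_one_gt_d9
  have he027 := quadratic_le_exp_of_nonneg (x := 0.27) (by norm_num)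
  have : 9.4075 < exp 2.27 := by
    calc (9.4075 : ℝ) < 2.7182818283 * 2.7182818283 * (1 + 0.27 + 0.27 ^ 2 / 2) := by norm_num
      _ ≤ _ := by rw [he]; gcongr
  unfold h; linarith

theorem exists_h_eq_zero_mem_Ioo : ∃ cs ∈ Set.Ioo (2.26 : ℝ) 2.27, h cs = 0 :=
  intermediate_value_Ioo (by norm_num) (by unfold h; fun_prop) ⟨h_neg_at_2_26, h_pos_at_2_27⟩

theorem hasDerivAt_g (c : ℝ) : HasDerivAt g (-(c * exp (-(2 * c)) * h c)) c := by
  have h2c : HasDerivAt (fun c : ℝ => -(2 * c)) (-2) c :=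
    ((hasDerivAt_id' c).const_mul 2).fun_neg.congr_deriv (by ring)
  have hexp : exp (-c) = exp c * exp (-(2 * c)) := by rw [← exp_add]; ring_nf
  refine ((hasDerivAt_pow 2 c).fun_mul ((hasDerivAt_neg' c).exp.fun_sub h2c.exp)).congr_deriv ?_
  rw [hexp, h]; ring

theorem strictMonoOn_g {cs : ℝ} (hroot : h cs = 0) : StrictMonoOn g (Set.Icc 0 cs) := by
  refine strictMonoOn_of_deriv_pos (convex_Icc 0 cs) (by unfold g; fun_prop) fun c hc => ?_
  rw [interior_Icc] at hc
  rw [(hasDerivAt_g c).deriv, neg_pos]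
  exact mul_neg_of_pos_of_neg (by have := hc.1; positivity) (h_neg_of_mem_Ioo hroot hc)

theorem strictAntiOn_g {cs : ℝ} (hcs : 0 < cs) (hroot : h cs = 0) :
    StrictAntiOn g (Set.Ici cs) := by
  refine strictAntiOn_of_deriv_neg (convex_Ici cs) (by unfold g; fun_prop) fun c hc => ?_
  rw [interior_Ici] at hc
  rw [(hasDerivAt_g c).deriv, neg_lt_zero]
  have := hcs.trans hc
  exact mul_pos (by positivity) (h_pos_of_gt hcs hroot hc)

end CriticalConstant

/-- **The critical constant `c*`.** The equation `2 - 2eᶜ + c(eᶜ - 2) = 0` has a unique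
root `c*` in `(0, ∞)`, with `2.26 < c* < 2.27`; the function
`g(c) = c²(e^{-c} - e^{-2c})` is strictly increasing on `(0, c*)`, strictly decreasing
on `(c*, ∞)`, and attains its maximum over `(0, ∞)` uniquely at `c*`. -/
theorem critical_constant_exists_unique :
    ∃ cs : ℝ, 0 < cs ∧ 2 - 2 * Real.exp cs + cs * (Real.exp cs - 2) = 0 ∧
      (∀ c : ℝ, 0 < c → 2 - 2 * Real.exp c + c * (Real.exp c - 2) = 0 → c = cs) ∧
      2.26 < cs ∧ cs < 2.27 ∧
      StrictMonoOn (fun c : ℝ => c ^ 2 * (Real.exp (-c) - Real.exp (-(2 * c))))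
        (Set.Ioo 0 cs) ∧
      StrictAntiOn (fun c : ℝ => c ^ 2 * (Real.exp (-c) - Real.exp (-(2 * c))))
        (Set.Ioi cs) ∧
      (∀ c : ℝ, 0 < c → c ≠ cs →
        c ^ 2 * (Real.exp (-c) - Real.exp (-(2 * c))) <
          cs ^ 2 * (Real.exp (-cs) - Real.exp (-(2 * cs)))) := by
  obtain ⟨cs, ⟨hlow, hupp⟩, hroot⟩ := CriticalConstant.exists_h_eq_zero_mem_Ioo
  have hcs : 0 < cs := by linarith
  have hmono := CriticalConstant.strictMonoOn_g hroot
  have hanti := CriticalConstant.strictAntiOn_g hcs hroot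
  refine ⟨cs, hcs, hroot, fun c hc => CriticalConstant.eq_of_h_eq_zero hcs hroot hc, hlow, hupp,
    hmono.mono Set.Ioo_subset_Icc_self, hanti.mono Set.Ioi_subset_Ici_self, fun c hc hne => ?_⟩
  rcases lt_or_gt_of_ne hne with hlt | hgt
  · exact hmono ⟨hc.le, hlt.le⟩ ⟨hcs.le, le_rfl⟩ hlt
  · exact hanti Set.self_mem_Ici hgt.le hgt
end

section
/- For every integer n ≥ 1 and every real p with 0 ≤ p ≤ 1, it holds that 0 ≤ e^{−n·p} − (1−p)^n ≤ (n·p²/2)·e^{−(n−1)·p}. -/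
open Real

private lemma pow_sub_pow_le_aux (a b : ℝ) (hb : 0 ≤ b) (hab : b ≤ a) :
    ∀ n : ℕ, a ^ n - b ^ n ≤ n * (a - b) * a ^ (n - 1) := by
  intro n
  induction n with
  | zero => simp
  | succ m ih =>
    have ha : 0 ≤ a := hb.trans hab
    have hba : b ^ m ≤ a ^ m := pow_le_pow_left₀ hb hab m
    cases m with
    | zero => simp
    | succ k =>
      have hk : (k + 1 : ℕ) - 1 = k := rfl
      rw [hk] at ih
      have h1 : a ^ (k + 1 + 1) - b ^ (k + 1 + 1)
          = a * (a ^ (k + 1) - b ^ (k + 1)) + (a - b) * b ^ (k + 1) := by ring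
      push_cast at ih ⊢
      have h2 : a * (a ^ (k + 1) - b ^ (k + 1)) ≤ a * (((k : ℝ) + 1) * (a - b) * a ^ k) :=
        mul_le_mul_of_nonneg_left ih ha
      have h3 : (a - b) * b ^ (k + 1) ≤ (a - b) * a ^ (k + 1) :=
        mul_le_mul_of_nonneg_left hba (by linarith)
      have h4 : a * (((k : ℝ) + 1) * (a - b) * a ^ k) = ((k : ℝ) + 1) * (a - b) * a ^ (k + 1) := by
        rw [pow_succ]; ring
      nlinarith [h1, h2, h3, h4]

/-- **Poissonization error.** For `n ≥ 1` and `0 ≤ p ≤ 1`: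
`0 ≤ e^{-np} - (1-p)ⁿ ≤ (n p²/2) e^{-(n-1)p}`. -/
theorem poissonization_error (n : ℕ) (hn : 1 ≤ n) (p : ℝ) (hp : 0 ≤ p) (hp' : p ≤ 1) :
    0 ≤ Real.exp (-(n : ℝ) * p) - (1 - p) ^ n ∧
      Real.exp (-(n : ℝ) * p) - (1 - p) ^ n
        ≤ ((n : ℝ) * p ^ 2 / 2) * Real.exp (-((n : ℝ) - 1) * p) := by
  set a := Real.exp (-p) with ha_def
  have ha : 0 < a := Real.exp_pos _
  have hb : (0 : ℝ) ≤ 1 - p := by linarith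
  have hba : 1 - p ≤ a := by
    have := Real.add_one_le_exp (-p)
    linarith
  have hpow : Real.exp (-(n : ℝ) * p) = a ^ n := by
    rw [ha_def, ← Real.exp_nat_mul]; ring_nf
  have hpow' : Real.exp (-((n : ℝ) - 1) * p) = a ^ (n - 1) := by
    rw [ha_def, ← Real.exp_nat_mul]
    congr 1
    have : ((n - 1 : ℕ) : ℝ) = (n : ℝ) - 1 := by
      have := Nat.cast_sub hn (R := ℝ)
      simpa using this
    rw [this]; ring
  constructor
  · rw [hpow]
    have : (1 - p) ^ n ≤ a ^ n := pow_le_pow_left₀ hb hba n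
    linarith
  · -- a - (1 - p) ≤ p^2 / 2
    have hsum : 1 + p + p ^ 2 / 2 ≤ Real.exp p := by
      have h := Real.sum_le_exp_of_nonneg hp 3
      simp [Finset.sum_range_succ, Nat.factorial] at h
      nlinarith [h]
    have hquad : a - (1 - p) ≤ p ^ 2 / 2 := by
      have hinv : a = (Real.exp p)⁻¹ := by
        rw [ha_def, ← Real.exp_neg]
      have hep : 0 < Real.exp p := Real.exp_pos p
      have hpos : (0:ℝ) < 1 + p + p ^ 2 / 2 := by positivity
      have h1 : (Real.exp p)⁻¹ ≤ (1 + p + p ^ 2 / 2)⁻¹ :=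
        inv_anti₀ hpos hsum
      have hx : (1 + p + p ^ 2 / 2) * (1 + p + p ^ 2 / 2)⁻¹ = 1 :=
        mul_inv_cancel₀ hpos.ne'
      have h2 : (1 + p + p ^ 2 / 2)⁻¹ ≤ 1 - p + p ^ 2 / 2 := by
        nlinarith [inv_nonneg.2 hpos.le, sq_nonneg p, sq_nonneg (p ^ 2)]
      rw [hinv]
      linarith
    have key := pow_sub_pow_le_aux a (1 - p) hb hba n
    rw [hpow, hpow']
    have hstep : (n : ℝ) * (a - (1 - p)) * a ^ (n - 1)
        ≤ (n : ℝ) * (p ^ 2 / 2) * a ^ (n - 1) := by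
      apply mul_le_mul_of_nonneg_right _ (pow_nonneg ha.le _)
      apply mul_le_mul_of_nonneg_left hquad (by positivity)
    calc a ^ n - (1 - p) ^ n ≤ (n : ℝ) * (a - (1 - p)) * a ^ (n - 1) := key
      _ ≤ (n : ℝ) * (p ^ 2 / 2) * a ^ (n - 1) := hstep
      _ = ((n : ℝ) * p ^ 2 / 2) * a ^ (n - 1) := by ring
end

section
/- Let P be a real polynomial of degree at most 3, let n > 0 be a real number, and let λ be a real number such that P and λ are not both zero. Then the set {u ∈ ℝ : P(u)·e^{−n·u} = λ} contains at most 4 elements. -/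
/-!
Multiplying by `e^{nu}`, the equation becomes `P(u) = λ e^{nu}`. For `λ = 0` its solutions are the
roots of `P ≠ 0`. For `λ ≠ 0`, Rolle's theorem bounds the number of zeros of
`u ↦ Q(u) - c e^{ru}` by one more than that of its derivative `u ↦ Q'(u) - c r e^{ru}`, which has the
same shape; after four derivatives the polynomial part vanishes and `-c r⁴ e^{ru}` has no zeros.
-/

open Real Polynomial

theorem card_le_card_add_one_of_deriv_eq_zero {f : ℝ → ℝ} (hf : Continuous f) {s t : Finset ℝ}
    (hs : ∀ x ∈ s, f x = 0) (ht : ∀ x, deriv f x = 0 → x ∈ t) : s.card ≤ t.card + 1 :=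
  Finset.card_le_of_interleaved fun x hx y hy hxy _ => by
    obtain ⟨z, hz, hz'⟩ := exists_deriv_eq_zero hxy hf.continuousOn ((hs x hx).trans (hs y hy).symm)
    exact ⟨z, ht z hz', hz⟩

theorem finite_zeros_and_ncard_le_of_finite_deriv_zeros {f : ℝ → ℝ} (hf : Continuous f)
    (hd : {x | deriv f x = 0}.Finite) :
    {x | f x = 0}.Finite ∧ {x | f x = 0}.ncard ≤ {x | deriv f x = 0}.ncard + 1 := by
  have hcard (s : Finset ℝ) (hs : ↑s ⊆ {x | f x = 0}) :
      s.card ≤ {x | deriv f x = 0}.ncard + 1 := by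
    rw [Set.ncard_eq_toFinset_card _ hd]
    exact card_le_card_add_one_of_deriv_eq_zero hf hs fun x hx => hd.mem_toFinset.2 hx
  have hfin : {x | f x = 0}.Finite := by
    by_contra hinf
    obtain ⟨s, hs, hs_card⟩ := Set.Infinite.exists_subset_card_eq hinf
      ({x | deriv f x = 0}.ncard + 2)
    have := hcard s hs
    omega
  refine ⟨hfin, ?_⟩
  rw [Set.ncard_eq_toFinset_card _ hfin]
  exact hcard _ (by simp)

theorem hasDerivAt_eval_sub_mul_exp (Q : ℝ[X]) (c r u : ℝ) :
    HasDerivAt (fun x => Q.eval x - c * exp (r * x))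
      ((derivative Q).eval u - c * r * exp (r * u)) u := by
  have hexp : HasDerivAt (fun x => exp (r * x)) (exp (r * u) * r) u := by
    simpa using ((hasDerivAt_id u).const_mul r).exp
  exact ((Q.hasDerivAt u).sub (hexp.const_mul c)).congr_deriv (by ring)

theorem finite_and_ncard_le_of_iterate_derivative_eq_zero {Q : ℝ[X]} {d : ℕ}
    (hQ : derivative^[d] Q = 0) {c r : ℝ} (hc : c ≠ 0) (hr : r ≠ 0) :
    {u | Q.eval u = c * exp (r * u)}.Finite ∧ {u | Q.eval u = c * exp (r * u)}.ncard ≤ d := by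
  induction d generalizing Q c with
  | zero =>
    have hempty : {u | Q.eval u = c * exp (r * u)} = ∅ := by
      ext u
      simp [show Q = 0 from hQ, eq_comm, hc, (exp_pos _).ne]
    simp [hempty]
  | succ d ih =>
    have hderiv : deriv (fun x => Q.eval x - c * exp (r * x)) =
        fun u => (derivative Q).eval u - c * r * exp (r * u) :=
      funext fun u => (hasDerivAt_eval_sub_mul_exp Q c r u).deriv
    have hcont : Continuous fun x => Q.eval x - c * exp (r * x) := by fun_prop
    obtain ⟨hfin, hcard⟩ := ih (Q := derivative Q) (c := c * r)
      (by rwa [← Function.iterate_succ_apply]) (mul_ne_zero hc hr)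
    have hrolle := finite_zeros_and_ncard_le_of_finite_deriv_zeros hcont
    simp only [hderiv, sub_eq_zero] at hrolle
    exact ⟨(hrolle hfin).1, (hrolle hfin).2.trans (by omega)⟩

/-- **Root counting.** If `P` is a real polynomial of degree at most 3, `n > 0`,
and `P` and `λ` are not both zero, then the equation `P(u) e^{-nu} = λ` has
at most 4 real solutions. -/
theorem poly_exp_roots_le_four (P : Polynomial ℝ) (hP : P.natDegree ≤ 3)
    (n : ℝ) (hn : 0 < n) (lam : ℝ) (hne : P ≠ 0 ∨ lam ≠ 0) :
    {u : ℝ | P.eval u * Real.exp (-n * u) = lam}.Finite ∧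
      {u : ℝ | P.eval u * Real.exp (-n * u) = lam}.ncard ≤ 4 := by
  rcases eq_or_ne lam 0 with rfl | hlam
  · have hP0 : P ≠ 0 := hne.resolve_right (not_not.2 rfl)
    have hroots : {u : ℝ | P.eval u * exp (-n * u) = 0} = P.rootSet ℝ := by
      ext u
      simp [mem_rootSet, hP0, (exp_pos _).ne']
    rw [hroots]
    exact ⟨P.rootSet_finite ℝ, (P.ncard_rootSet_le ℝ).trans (by omega)⟩
  · have hset : {u : ℝ | P.eval u * exp (-n * u) = lam} = {u | P.eval u = lam * exp (n * u)} := by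
      ext u
      rw [Set.mem_ofPred_eq, Set.mem_ofPred_eq, ← eq_div_iff (exp_pos _).ne', div_eq_mul_inv,
        ← exp_neg, neg_mul, neg_neg]
    rw [hset]
    exact finite_and_ncard_le_of_iterate_derivative_eq_zero
      (iterate_derivative_eq_zero (by omega)) hlam hn.ne'
end

section
/- Let A > 0 and n > 0 be real numbers and define g(u) = (u³ − A·u²)·e^{−n·u}. Then no line is tangent to the graph of g at two distinct positive points: there do not exist reals λ, μ and u₁, u₂ with 0 < u₁ < u₂ such that g(u᾽) = λ·u᾽ + μ and g′(u᾽) = λ for both u᾽ = u₁ and u᾽ = u₂. -/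
/-!
Multiplying by `e^{nu}/u²` turns `g` into `u - A`, whose second derivative vanishes. Hence a line
`ℓ(u) = λu + μ` tangent to `g` at `u₁ < u₂` gives a function `(u - A) - ℓ(u) e^{nu}/u²` with double
zeros at `u₁` and `u₂`, and Rolle's theorem, applied three times, gives two zeros of
`(ℓ(u) e^{nu}/u²)'' = e^{nu} u⁻⁴ (λu(n²u² - 2nu + 2) + μ(n²u² - 4nu + 6))` in `(u₁, u₂)`.
The linear system for `(λ, μ)` at these two points is nonsingular, so `λ = μ = 0`; but then the
function is `u - A`, whose derivative does not vanish at `u₁`.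
-/

open Real Set

theorem hasDerivAt_mul_exp_div_pow {p : ℝ → ℝ} {p' u : ℝ} (n : ℝ) (k : ℕ)
    (hp : HasDerivAt p p' u) (hu : u ≠ 0) :
    HasDerivAt (fun x => p x * exp (n * x) / x ^ k)
      ((u * p' + (n * u - k) * p u) * exp (n * u) / u ^ (k + 1)) u := by
  have hexp : HasDerivAt (fun x => exp (n * x)) (exp (n * u) * n) u :=
    ((hasDerivAt_id u).const_mul n).exp.congr_deriv (by simp)
  refine ((hp.mul hexp).div (hasDerivAt_pow k u) (pow_ne_zero k hu)).congr_deriv ?_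
  simp only [Pi.mul_apply]
  rcases k with _ | k
  · field_simp; ring
  · field_simp; push_cast; ring

theorem hasDerivAt_cubic_mul_exp (A n u : ℝ) :
    HasDerivAt (fun u => (u ^ 3 - A * u ^ 2) * exp (-n * u))
      (((3 * u ^ 2 - 2 * A * u) - n * (u ^ 3 - A * u ^ 2)) * exp (-n * u)) u := by
  have hpoly : HasDerivAt (fun u => u ^ 3 - A * u ^ 2) (3 * u ^ 2 - 2 * A * u) u :=
    ((hasDerivAt_pow 3 u).sub ((hasDerivAt_pow 2 u).const_mul A)).congr_deriv (by ring)
  have hexp : HasDerivAt (fun u => exp (-n * u)) (exp (-n * u) * -n) u :=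
    ((hasDerivAt_id u).const_mul (-n)).exp.congr_deriv (by simp)
  exact (hpoly.mul hexp).congr_deriv (by ring)

theorem exists_two_zeros_of_hasDerivAt_hasDerivAt {f f' f'' : ℝ → ℝ} {a b : ℝ} (hab : a < b)
    (hf : ∀ x ∈ Icc a b, HasDerivAt f (f' x) x) (hf' : ∀ x ∈ Icc a b, HasDerivAt f' (f'' x) x)
    (hfab : f a = f b) (hf'a : f' a = 0) (hf'b : f' b = 0) :
    ∃ x₁ ∈ Ioo a b, ∃ x₂ ∈ Ioo a b, x₁ < x₂ ∧ f'' x₁ = 0 ∧ f'' x₂ = 0 := by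
  obtain ⟨c, hc, hf'c⟩ := exists_hasDerivAt_eq_zero hab
    (fun x hx => (hf x hx).continuousAt.continuousWithinAt) hfab
    (fun x hx => hf x (Ioo_subset_Icc_self hx))
  have hsub₁ : Icc a c ⊆ Icc a b := Icc_subset_Icc_right hc.2.le
  have hsub₂ : Icc c b ⊆ Icc a b := Icc_subset_Icc_left hc.1.le
  obtain ⟨x₁, hx₁, hf''x₁⟩ := exists_hasDerivAt_eq_zero hc.1
    (fun x hx => (hf' x (hsub₁ hx)).continuousAt.continuousWithinAt) (hf'a.trans hf'c.symm)
    (fun x hx => hf' x (hsub₁ (Ioo_subset_Icc_self hx)))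
  obtain ⟨x₂, hx₂, hf''x₂⟩ := exists_hasDerivAt_eq_zero hc.2
    (fun x hx => (hf' x (hsub₂ hx)).continuousAt.continuousWithinAt) (hf'c.trans hf'b.symm)
    (fun x hx => hf' x (hsub₂ (Ioo_subset_Icc_self hx)))
  exact ⟨x₁, ⟨hx₁.1, hx₁.2.trans hc.2⟩, x₂, ⟨hc.1.trans hx₂.1, hx₂.2⟩, hx₁.2.trans hx₂.1,
    hf''x₁, hf''x₂⟩

theorem eq_zero_of_two_roots {lam mu n x₁ x₂ : ℝ} (hx : x₁ ≠ x₂)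
    (h₁ : lam * x₁ * (n ^ 2 * x₁ ^ 2 - 2 * n * x₁ + 2) + mu * (n ^ 2 * x₁ ^ 2 - 4 * n * x₁ + 6) = 0)
    (h₂ : lam * x₂ * (n ^ 2 * x₂ ^ 2 - 2 * n * x₂ + 2) + mu * (n ^ 2 * x₂ ^ 2 - 4 * n * x₂ + 6) = 0) :
    lam = 0 ∧ mu = 0 := by
  -- The determinant of this linear system in `(lam, mu)` is `x₁ - x₂` times a positive quartic.
  set s := n * x₁
  set t := n * x₂
  have hK : 0 < (s * t - 2 * s - 2 * t + 2) ^ 2 + 2 * (s - 1) ^ 2 + 2 * (t - 1) ^ 2 + 4 := by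
    positivity
  have hdet : lam * ((x₁ - x₂) * ((s * t - 2 * s - 2 * t + 2) ^ 2 + 2 * (s - 1) ^ 2
      + 2 * (t - 1) ^ 2 + 4)) = 0 := by
    linear_combination (n ^ 2 * x₂ ^ 2 - 4 * n * x₂ + 6) * h₁
      - (n ^ 2 * x₁ ^ 2 - 4 * n * x₁ + 6) * h₂
  have hlam : lam = 0 := by
    simpa [sub_ne_zero.2 hx, hK.ne'] using hdet
  refine ⟨hlam, ?_⟩
  have hq : 0 < (s - 2) ^ 2 + 2 := by positivity
  have : mu * ((s - 2) ^ 2 + 2) = 0 := by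
    linear_combination h₁ - x₁ * (n ^ 2 * x₁ ^ 2 - 2 * n * x₁ + 2) * hlam
  simpa [hq.ne'] using this

section ScaledGap

variable (A n lam mu : ℝ)

/-- For `u ≠ 0` this is `(g(u) - lam * u - mu) * exp (n * u) / u ^ 2`. -/
noncomputable def scaledGap (u : ℝ) : ℝ := u - A - (lam * u + mu) * exp (n * u) / u ^ 2

noncomputable def scaledGapDeriv (u : ℝ) : ℝ :=
  1 - (u * lam + (n * u - 2) * (lam * u + mu)) * exp (n * u) / u ^ 3

noncomputable def scaledGapDeriv2 (u : ℝ) : ℝ :=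
  -((lam * u * (n ^ 2 * u ^ 2 - 2 * n * u + 2) + mu * (n ^ 2 * u ^ 2 - 4 * n * u + 6))
    * exp (n * u) / u ^ 4)

variable {A n lam mu}

theorem hasDerivAt_scaledGap {u : ℝ} (hu : u ≠ 0) :
    HasDerivAt (scaledGap A n lam mu) (scaledGapDeriv n lam mu u) u := by
  have hline : HasDerivAt (fun x => lam * x + mu) lam u :=
    ((hasDerivAt_id u).const_mul lam).add_const mu |>.congr_deriv (mul_one lam)
  refine (((hasDerivAt_id u).sub_const A).sub
    (hasDerivAt_mul_exp_div_pow n 2 hline hu)).congr_deriv ?_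
  simp [scaledGapDeriv]

theorem hasDerivAt_scaledGapDeriv {u : ℝ} (hu : u ≠ 0) :
    HasDerivAt (scaledGapDeriv n lam mu) (scaledGapDeriv2 n lam mu u) u := by
  have hnum : HasDerivAt (fun x => x * lam + (n * x - 2) * (lam * x + mu))
      (lam + (n * (lam * u + mu) + (n * u - 2) * lam)) u := by
    refine ((hasDerivAt_id' u).mul_const lam |>.add
      ((((hasDerivAt_id' u).const_mul n).sub_const 2).mul
        (((hasDerivAt_id' u).const_mul lam).add_const mu))).congr_deriv ?_
    ring
  refine ((hasDerivAt_const u 1).sub (hasDerivAt_mul_exp_div_pow n 3 hnum hu)).congr_deriv ?_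
  simp only [scaledGapDeriv2]
  push_cast
  ring

theorem scaledGap_and_deriv_eq_zero_of_tangent {u : ℝ} (hu : u ≠ 0)
    (hg : (u ^ 3 - A * u ^ 2) * exp (-n * u) = lam * u + mu)
    (hd : ((3 * u ^ 2 - 2 * A * u) - n * (u ^ 3 - A * u ^ 2)) * exp (-n * u) = lam) :
    scaledGap A n lam mu u = 0 ∧ scaledGapDeriv n lam mu u = 0 := by
  obtain rfl := eq_sub_of_add_eq' hg.symm
  subst hd
  simp only [scaledGap, scaledGapDeriv, neg_mul, exp_neg]
  constructor <;> field_simp <;> ring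

theorem scaledGapDeriv2_eq_zero_iff {u : ℝ} (hu : u ≠ 0) :
    scaledGapDeriv2 n lam mu u = 0 ↔
      lam * u * (n ^ 2 * u ^ 2 - 2 * n * u + 2) + mu * (n ^ 2 * u ^ 2 - 4 * n * u + 6) = 0 := by
  simp [scaledGapDeriv2, hu, exp_ne_zero]

end ScaledGap

theorem no_double_tangent_general (A n : ℝ) :
    ¬ ∃ (lam mu u₁ u₂ : ℝ), 0 < u₁ ∧ u₁ < u₂ ∧
      (fun u : ℝ => (u ^ 3 - A * u ^ 2) * Real.exp (-n * u)) u₁ = lam * u₁ + mu ∧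
      deriv (fun u : ℝ => (u ^ 3 - A * u ^ 2) * Real.exp (-n * u)) u₁ = lam ∧
      (fun u : ℝ => (u ^ 3 - A * u ^ 2) * Real.exp (-n * u)) u₂ = lam * u₂ + mu ∧
      deriv (fun u : ℝ => (u ^ 3 - A * u ^ 2) * Real.exp (-n * u)) u₂ = lam := by
  rintro ⟨lam, mu, u₁, u₂, hu₁, hu₁₂, hg₁, hd₁, hg₂, hd₂⟩
  have hu₂ : u₂ ≠ 0 := (hu₁.trans hu₁₂).ne'
  have hne : ∀ x ∈ Icc u₁ u₂, x ≠ 0 := fun x hx => (hu₁.trans_le hx.1).ne'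
  rw [(hasDerivAt_cubic_mul_exp A n u₁).deriv] at hd₁
  rw [(hasDerivAt_cubic_mul_exp A n u₂).deriv] at hd₂
  obtain ⟨hF₁, hF'₁⟩ := scaledGap_and_deriv_eq_zero_of_tangent hu₁.ne' hg₁ hd₁
  obtain ⟨hF₂, hF'₂⟩ := scaledGap_and_deriv_eq_zero_of_tangent hu₂ hg₂ hd₂
  obtain ⟨x₁, hx₁, x₂, hx₂, hx₁₂, hF''₁, hF''₂⟩ := exists_two_zeros_of_hasDerivAt_hasDerivAt hu₁₂
    (fun x hx => hasDerivAt_scaledGap (hne x hx))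
    (fun x hx => hasDerivAt_scaledGapDeriv (hne x hx)) (hF₁.trans hF₂.symm) hF'₁ hF'₂
  obtain ⟨rfl, rfl⟩ := eq_zero_of_two_roots hx₁₂.ne
    ((scaledGapDeriv2_eq_zero_iff (hne x₁ (Ioo_subset_Icc_self hx₁))).1 hF''₁)
    ((scaledGapDeriv2_eq_zero_iff (hne x₂ (Ioo_subset_Icc_self hx₂))).1 hF''₂)
  simp [scaledGapDeriv] at hF'₁

/-- **No double tangent line.** For `A, n > 0` and `g(u) = (u³ - A u²) e^{-nu}`,
no line is tangent to the graph of `g` at two distinct positive points. -/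
theorem no_double_tangent (A n : ℝ) (hA : 0 < A) (hn : 0 < n) :
    ¬ ∃ (lam mu u₁ u₂ : ℝ), 0 < u₁ ∧ u₁ < u₂ ∧
      (fun u : ℝ => (u ^ 3 - A * u ^ 2) * Real.exp (-n * u)) u₁ = lam * u₁ + mu ∧
      deriv (fun u : ℝ => (u ^ 3 - A * u ^ 2) * Real.exp (-n * u)) u₁ = lam ∧
      (fun u : ℝ => (u ^ 3 - A * u ^ 2) * Real.exp (-n * u)) u₂ = lam * u₂ + mu ∧
      deriv (fun u : ℝ => (u ^ 3 - A * u ^ 2) * Real.exp (-n * u)) u₂ = lam :=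
  no_double_tangent_general A n
end
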